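/- arXiv:2604.20189 — 2 statements merged into one kernel-verified Lean document; each statement's English description precedes it below -/
import Mathlib

section
/- The following are equivalent: (a) S′∖S ≠ ∅ and for every u ∈ S′∖S and every h ∈ {a₀, a₁, …, a_k} one has u + e_h ∈ S; (b) 𝕀 ≠ ∅, δ₁(w_i) = δ₂(w_i) = deg(w_i) + 1 for every i ∈ 𝕀, and there is no pair i, j ∈ 𝕀 such that w_j − w_i = e_h for some h ∈ {a₁,…,a_{k−1}}. -/
namespace ProjMonomialCurve

/-- The numerical semigroup generated by `a 1, …, a k` (equivalently by `A₁ = {0,a 1,…,a k}`). -/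
def S1 (k : ℕ) (a : ℕ → ℕ) : Set ℕ :=
  {n | ∃ x : ℕ → ℕ, n = ∑ i ∈ Finset.Icc 1 k, x i * a i}

/-- The numerical semigroup generated by the nonzero elements `d - a i` (`0 ≤ i ≤ k-1`)
of `A₂`, where `d = a k`. -/
def S2 (k : ℕ) (a : ℕ → ℕ) : Set ℕ :=
  {n | ∃ x : ℕ → ℕ, n = ∑ i ∈ Finset.range k, x i * (a k - a i)}

/-- `δ₁ n`: least total number of summands over representations `n = ∑ xᵢ aᵢ`. -/
noncomputable def delta1 (k : ℕ) (a : ℕ → ℕ) (n : ℕ) : ℕ :=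
  sInf {m | ∃ x : ℕ → ℕ, n = ∑ i ∈ Finset.Icc 1 k, x i * a i ∧ m = ∑ i ∈ Finset.Icc 1 k, x i}

/-- `δ₂ n`: least total number of summands over representations of `n` by the
nonzero elements of `A₂`. -/
noncomputable def delta2 (k : ℕ) (a : ℕ → ℕ) (n : ℕ) : ℕ :=
  sInf {m | ∃ x : ℕ → ℕ,
    n = ∑ i ∈ Finset.range k, x i * (a k - a i) ∧ m = ∑ i ∈ Finset.range k, x i}

/-- `ω₁ i`: the least element of `S₍₁₎` congruent to `i` modulo `d = a k`. -/
noncomputable def omega1 (k : ℕ) (a : ℕ → ℕ) (i : ℕ) : ℕ :=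
  sInf {n | n ∈ S1 k a ∧ n % a k = i % a k}

/-- `ω₂ i`: the least element of `S₍₂₎` congruent to `i` modulo `d = a k`. -/
noncomputable def omega2 (k : ℕ) (a : ℕ → ℕ) (i : ℕ) : ℕ :=
  sInf {n | n ∈ S2 k a ∧ n % a k = i % a k}

/-- `w i = (ω₁(i), ω₂(d-i))`. -/
noncomputable def w (k : ℕ) (a : ℕ → ℕ) (i : ℕ) : ℕ × ℕ :=
  (omega1 k a i, omega2 k a (a k - i))

/-- `e h = (h, d - h)`. -/
def e (k : ℕ) (a : ℕ → ℕ) (h : ℕ) : ℕ × ℕ := (h, a k - h)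

/-- The affine semigroup `S ⊆ ℕ²` generated by `e (a 0), …, e (a k)`. -/
def S (k : ℕ) (a : ℕ → ℕ) : Set (ℕ × ℕ) :=
  {u | ∃ x : ℕ → ℕ, u = ∑ i ∈ Finset.range (k+1), x i • e k a (a i)}

/-- `S' = {u ∈ ℕ² | u + p•e₀ ∈ S and u + p•e_d ∈ S for some p ∈ ℕ}`. -/
def S' (k : ℕ) (a : ℕ → ℕ) : Set (ℕ × ℕ) :=
  {u | ∃ p : ℕ, u + p • e k a 0 ∈ S k a ∧ u + p • e k a (a k) ∈ S k a}

/-- `deg u = (u₁ + u₂)/d` for `u ∈ ℕ²`. -/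
def deg (k : ℕ) (a : ℕ → ℕ) (u : ℕ × ℕ) : ℕ := (u.1 + u.2) / a k

/-- The index set `𝕀`. -/
noncomputable def II (k : ℕ) (a : ℕ → ℕ) : Set ℕ :=
  {i | 1 ≤ i ∧ i ≤ a k - 1 ∧ (∀ j, 1 ≤ j → j ≤ k - 1 → i ≠ a j) ∧
    deg k a (w k a i) < delta1 k a (w k a i).1}

/-- `T = {u ∈ ℤ² | d ∣ u₁+u₂, u₁ ∉ S₍₁₎, u₂ ∉ S₍₂₎}`. -/
def T (k : ℕ) (a : ℕ → ℕ) : Set (ℤ × ℤ) :=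
  {u | (a k : ℤ) ∣ u.1 + u.2 ∧ (∀ n ∈ S1 k a, (n : ℤ) ≠ u.1) ∧ (∀ n ∈ S2 k a, (n : ℤ) ≠ u.2)}

/-- `deg` for integer points. -/
def degZ (k : ℕ) (a : ℕ → ℕ) (u : ℤ × ℤ) : ℤ := (u.1 + u.2) / (a k : ℤ)

/-- The Castelnuovo–Mumford regularity, expressed combinatorially:
`max({deg u + 1 : u ∈ S'∖S} ∪ {deg u + 2 : u ∈ T})`. -/
noncomputable def reg (k : ℕ) (a : ℕ → ℕ) : ℤ :=
  sSup ({z : ℤ | ∃ u ∈ S' k a \ S k a, z = (deg k a u : ℤ) + 1} ∪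
        {z : ℤ | ∃ u ∈ T k a, z = degZ k a u + 2})

/-- Frobenius number of `S₍₁₎` (greatest integer not in it; `-1` if the semigroup is all of `ℕ`). -/
noncomputable def F1 (k : ℕ) (a : ℕ → ℕ) : ℤ :=
  sSup {z : ℤ | ∀ n ∈ S1 k a, (n : ℤ) ≠ z}

/-- Frobenius number of `S₍₂₎`. -/
noncomputable def F2 (k : ℕ) (a : ℕ → ℕ) : ℤ :=
  sSup {z : ℤ | ∀ n ∈ S2 k a, (n : ℤ) ≠ z}

/-- The largest gap `λ_max = max_{1 ≤ i ≤ k} (a i - a (i-1) - 1)`. -/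
def lamMax (k : ℕ) (a : ℕ → ℕ) : ℕ :=
  (Finset.Icc 1 k).sup (fun i => a i - a (i-1) - 1)

/-- The second largest gap: the minimum over `i` of the largest gap among indices `≠ i`. -/
noncomputable def lamSl (k : ℕ) (a : ℕ → ℕ) : ℕ :=
  sInf {m | ∃ i, 1 ≤ i ∧ i ≤ k ∧
    m = ((Finset.Icc 1 k).erase i).sup (fun j => a j - a (j-1) - 1)}

/-- The set `A₁ = {a 0, a 1, …, a k}`. -/
def A1set (k : ℕ) (a : ℕ → ℕ) : Set ℕ := {m | ∃ j ≤ k, a j = m}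

/-!
Inside `S′` (the `u` with `d ∣ u₁ + u₂`, `u₁ ∈ S₍₁₎`, `u₂ ∈ S₍₂₎`) membership in `S` is
`δ₁(u₁) ≤ deg u`, equivalently `δ₂(u₂) ≤ deg u`. Every `u ∈ S′ ∖ S` is `w_i + (βd, αd)` with
`i = u₁ mod d ∈ 𝕀`, `deg w_i + α < δ₁(w_i)` and `deg w_i + β < δ₂(w_i)`; under the degree
condition of (b) this forces `α = β = 0`, so `S′ ∖ S = {w_i : i ∈ 𝕀}`. Then `w_i + e₀ ∈ S` and
`w_i + e_d ∈ S` say exactly `δ₁(w_i), δ₂(w_i) ≤ deg w_i + 1`, while `w_i + e_{a_h}` (`0 < h < k`)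
lies in `S′`, hence in `S` unless it is some `w_j`.
-/

open Finset

/- `S1 k a`, `delta1 k a` are `natSpan (Icc 1 k) a`, `minLen (Icc 1 k) a` by unfolding, and
`S2 k a`, `delta2 k a` are the same for `range k` and `fun i => a k - a i`. -/
def natSpan (s : Finset ℕ) (c : ℕ → ℕ) : Set ℕ :=
  {n | ∃ x : ℕ → ℕ, n = ∑ i ∈ s, x i * c i}

noncomputable def minLen (s : Finset ℕ) (c : ℕ → ℕ) (n : ℕ) : ℕ :=
  sInf {m | ∃ x : ℕ → ℕ, n = ∑ i ∈ s, x i * c i ∧ m = ∑ i ∈ s, x i}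

section natSpan

variable {s : Finset ℕ} {c : ℕ → ℕ} {j n : ℕ}

theorem minLen_le (x : ℕ → ℕ) (hx : n = ∑ i ∈ s, x i * c i) : minLen s c n ≤ ∑ i ∈ s, x i :=
  Nat.sInf_le ⟨x, hx, rfl⟩

theorem exists_minLen_eq (hn : n ∈ natSpan s c) :
    ∃ x : ℕ → ℕ, n = ∑ i ∈ s, x i * c i ∧ minLen s c n = ∑ i ∈ s, x i := by
  obtain ⟨x, hx⟩ := hn
  exact Nat.sInf_mem (s := {m | ∃ x : ℕ → ℕ, n = ∑ i ∈ s, x i * c i ∧ m = ∑ i ∈ s, x i})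
    ⟨_, x, hx, rfl⟩

theorem zero_mem_natSpan : 0 ∈ natSpan s c := ⟨fun _ => 0, by simp⟩

theorem mem_natSpan_of_mem (hj : j ∈ s) : c j ∈ natSpan s c :=
  ⟨Pi.single j 1, by simp [Pi.single_apply, ite_mul, hj]⟩

theorem minLen_zero : minLen s c 0 = 0 :=
  Nat.eq_zero_of_le_zero <| by simpa using minLen_le (s := s) (c := c) 0 (by simp)

theorem minLen_le_one (hj : j ∈ s) : minLen s c (c j) ≤ 1 := by
  simpa [Pi.single_apply, hj] using
    minLen_le (s := s) (n := c j) (Pi.single j 1 : ℕ → ℕ) (by simp [Pi.single_apply, ite_mul, hj])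

theorem minLen_add_mul_le (hj : j ∈ s) (hn : n ∈ natSpan s c) (β : ℕ) :
    minLen s c (n + β * c j) ≤ minLen s c n + β := by
  obtain ⟨x, hx, hmin⟩ := exists_minLen_eq hn
  calc minLen s c (n + β * c j) ≤ ∑ i ∈ s, (x + Pi.single j β : ℕ → ℕ) i :=
        minLen_le _ (by simp [add_mul, sum_add_distrib, hx, Pi.single_apply, ite_mul, hj])
    _ = minLen s c n + β := by simp [sum_add_distrib, hmin, hj]

theorem sum_mul_add_sum_mul {c' : ℕ → ℕ} {d : ℕ} (hcd : ∀ i ∈ s, c i + c' i = d) (x : ℕ → ℕ) :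
    ∑ i ∈ s, x i * c i + ∑ i ∈ s, x i * c' i = (∑ i ∈ s, x i) * d := by
  rw [← sum_add_distrib, sum_mul]
  exact sum_congr rfl fun i hi => by rw [← mul_add, hcd i hi]

theorem exists_sums_eq_iff {c' : ℕ → ℕ} {d p q : ℕ} (hd : 0 < d) (hj : j ∈ s) (hcj : c j = 0)
    (hcd : ∀ i ∈ s, c i + c' i = d) :
    (∃ x : ℕ → ℕ, p = ∑ i ∈ s, x i * c i ∧ q = ∑ i ∈ s, x i * c' i) ↔
      p ∈ natSpan (s.erase j) c ∧ d ∣ p + q ∧ minLen (s.erase j) c p * d ≤ p + q := by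
  have hfst (x : ℕ → ℕ) : ∑ i ∈ s, x i * c i = ∑ i ∈ s.erase j, x i * c i := by
    rw [← add_sum_erase s _ hj, hcj, mul_zero, zero_add]
  constructor
  · rintro ⟨x, rfl, rfl⟩
    rw [sum_mul_add_sum_mul hcd, hfst]
    refine ⟨⟨x, rfl⟩, dvd_mul_left _ _, Nat.mul_le_mul_right _ ?_⟩
    exact (minLen_le x rfl).trans (sum_le_sum_of_subset (erase_subset j s))
  · rintro ⟨hp, ⟨m, hm⟩, hle⟩
    obtain ⟨y, hy, hmin⟩ := exists_minLen_eq hp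
    have hym : ∑ i ∈ s.erase j, y i ≤ m :=
      hmin ▸ Nat.le_of_mul_le_mul_left (by rwa [mul_comm, ← hm]) hd
    -- the generator `(c j, c' j) = (0, d)` pads the representation of `p` up to total length `m`
    obtain ⟨x, hxj, hx⟩ : ∃ x : ℕ → ℕ, x j = m - ∑ i ∈ s.erase j, y i ∧ ∀ i ∈ s.erase j, x i = y i :=
      ⟨Function.update y j _, Function.update_self .., fun i hi =>
        Function.update_of_ne (ne_of_mem_erase hi) _ _⟩
    have hp' : p = ∑ i ∈ s, x i * c i := by
      rw [hfst, sum_congr rfl fun i hi => by rw [hx i hi], hy]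
    have hlen : ∑ i ∈ s, x i = m := by
      rw [← add_sum_erase s _ hj, sum_congr rfl hx, hxj]
      exact Nat.sub_add_cancel hym
    have htot := sum_mul_add_sum_mul hcd x
    rw [← hp', hlen] at htot
    exact ⟨x, hp', by linarith⟩

end natSpan

section MinimalResidues

variable {P : Set ℕ} {d i n : ℕ}

theorem sInf_mod_spec (hn : n ∈ P) (hi : n % d = i % d) :
    sInf {m | m ∈ P ∧ m % d = i % d} ∈ P ∧ sInf {m | m ∈ P ∧ m % d = i % d} % d = i % d ∧
      ∃ β, n = sInf {m | m ∈ P ∧ m % d = i % d} + β * d := by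
  set M := {m | m ∈ P ∧ m % d = i % d}
  have hnM : n ∈ M := ⟨hn, hi⟩
  have hmem : sInf M ∈ M := Nat.sInf_mem ⟨n, hnM⟩
  have hle : sInf M ≤ n := Nat.sInf_le hnM
  obtain ⟨β, hβ⟩ := (Nat.modEq_iff_dvd' hle).1 (hmem.2.trans hi.symm)
  exact ⟨hmem.1, hmem.2, β, by rw [mul_comm] at hβ; omega⟩

theorem sInf_mod_eq_self (hn : n ∈ P) (hnd : n < d) :
    sInf {m | m ∈ P ∧ m % d = n % d} = n := by
  have hmem := Nat.sInf_mem (s := {m | m ∈ P ∧ m % d = n % d}) ⟨n, hn, rfl⟩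
  refine le_antisymm (Nat.sInf_le ⟨hn, rfl⟩) ?_
  calc n = n % d := (Nat.mod_eq_of_lt hnd).symm
    _ = sInf {m | m ∈ P ∧ m % d = n % d} % d := hmem.2.symm
    _ ≤ _ := Nat.mod_le _ _

theorem mod_eq_sub_of_dvd_add {m : ℕ} (hi : i ≤ d) (hn : n % d = i % d) (h : d ∣ n + m) :
    m % d = (d - i) % d :=
  Nat.ModEq.add_right_cancel' i <|
    calc m + i ≡ m + n [MOD d] := Nat.ModEq.add_left m hn.symm
      _ ≡ 0 [MOD d] := Nat.modEq_zero_iff_dvd.2 (by rwa [add_comm])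
      _ ≡ d - i + i [MOD d] := by
        rw [Nat.sub_add_cancel hi]; exact (Nat.modEq_zero_iff_dvd.2 dvd_rfl).symm

end MinimalResidues

section Curve

variable {k : ℕ} {a : ℕ → ℕ} {i n : ℕ}

theorem a_le_a_k (hmono : StrictMonoOn a (Set.Iic k)) {i : ℕ} (hi : i ≤ k) : a i ≤ a k :=
  hmono.monotoneOn hi Set.self_mem_Iic hi

theorem a_k_pos (ha0 : a 0 = 0) (hmono : StrictMonoOn a (Set.Iic k)) (hk : 0 < k) :
    0 < a k :=
  ha0 ▸ hmono (Nat.zero_le k) Set.self_mem_Iic hk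

theorem range_succ_erase_zero : (range (k + 1)).erase 0 = Icc 1 k := by
  ext; simp; omega

theorem mem_S_iff_exists_sums {u : ℕ × ℕ} :
    u ∈ S k a ↔ ∃ x : ℕ → ℕ, u.1 = ∑ i ∈ range (k + 1), x i * a i ∧
      u.2 = ∑ i ∈ range (k + 1), x i * (a k - a i) := by
  simp only [S, e, Set.mem_ofPred_eq, Prod.ext_iff, Prod.fst_sum, Prod.snd_sum, Prod.smul_mk,
    smul_eq_mul]

theorem add_mem_S {u v : ℕ × ℕ} (hu : u ∈ S k a) (hv : v ∈ S k a) : u + v ∈ S k a := by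
  obtain ⟨x, rfl⟩ := hu
  obtain ⟨y, rfl⟩ := hv
  exact ⟨x + y, by simp [add_smul, sum_add_distrib]⟩

theorem e_mem_S {j : ℕ} (hj : j ≤ k) : e k a (a j) ∈ S k a :=
  ⟨Pi.single j 1, by simp [Pi.single_apply, ite_smul, Nat.lt_succ_of_le hj]⟩

theorem add_mem_S' {u v : ℕ × ℕ} (hu : u ∈ S' k a) (hv : v ∈ S k a) : u + v ∈ S' k a := by
  obtain ⟨p, hp0, hpd⟩ := hu
  exact ⟨p, by simpa [add_right_comm] using add_mem_S hp0 hv,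
    by simpa [add_right_comm] using add_mem_S hpd hv⟩

theorem mem_S_iff_delta1 (ha0 : a 0 = 0) (hmono : StrictMonoOn a (Set.Iic k)) (hk : 0 < k)
    {u : ℕ × ℕ} :
    u ∈ S k a ↔ u.1 ∈ S1 k a ∧ a k ∣ u.1 + u.2 ∧ delta1 k a u.1 * a k ≤ u.1 + u.2 := by
  rw [mem_S_iff_exists_sums, exists_sums_eq_iff (a_k_pos ha0 hmono hk) (by simp) ha0
    fun i hi => Nat.add_sub_cancel' (a_le_a_k hmono (Nat.lt_succ_iff.1 (mem_range.1 hi))),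
    range_succ_erase_zero]
  rfl

theorem mem_S_iff_delta2 (ha0 : a 0 = 0) (hmono : StrictMonoOn a (Set.Iic k)) (hk : 0 < k)
    {u : ℕ × ℕ} :
    u ∈ S k a ↔ u.2 ∈ S2 k a ∧ a k ∣ u.1 + u.2 ∧ delta2 k a u.2 * a k ≤ u.1 + u.2 := by
  rw [mem_S_iff_exists_sums, add_comm u.1]
  simp only [and_comm (a := u.1 = _)]
  rw [exists_sums_eq_iff (c := fun i => a k - a i) (a_k_pos ha0 hmono hk)
    (self_mem_range_succ k) (Nat.sub_self _) fun i hi => Nat.sub_add_cancel (a_le_a_k hmono (Nat.lt_succ_iff.1 (mem_range.1 hi))),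
    range_add_one, erase_insert (by simp)]
  rfl

theorem mem_S'_iff (ha0 : a 0 = 0) (hmono : StrictMonoOn a (Set.Iic k)) (hk : 0 < k)
    {u : ℕ × ℕ} : u ∈ S' k a ↔ a k ∣ u.1 + u.2 ∧ u.1 ∈ S1 k a ∧ u.2 ∈ S2 k a := by
  have h0 (p : ℕ) : u + p • e k a 0 = (u.1, u.2 + p * a k) := by simp [e, Prod.ext_iff]
  have hd (p : ℕ) : u + p • e k a (a k) = (u.1 + p * a k, u.2) := by simp [e, Prod.ext_iff]
  simp only [S', Set.mem_ofPred_eq, h0, hd]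
  constructor
  · rintro ⟨p, hp0, hpd⟩
    obtain ⟨h1, hdvd, -⟩ := (mem_S_iff_delta1 ha0 hmono hk).1 hp0
    obtain ⟨h2, -, -⟩ := (mem_S_iff_delta2 ha0 hmono hk).1 hpd
    rw [← add_assoc] at hdvd
    exact ⟨(Nat.dvd_add_left (dvd_mul_left _ _)).1 hdvd, h1, h2⟩
  · rintro ⟨hdvd, h1, h2⟩
    refine ⟨delta1 k a u.1 + delta2 k a u.2, (mem_S_iff_delta1 ha0 hmono hk).2 ⟨h1, ?_, ?_⟩,
      (mem_S_iff_delta2 ha0 hmono hk).2 ⟨h2, ?_, ?_⟩⟩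
    · rw [← add_assoc]; exact dvd_add hdvd (dvd_mul_left _ _)
    · dsimp only; nlinarith
    · rw [add_right_comm]; exact dvd_add hdvd (dvd_mul_left _ _)
    · dsimp only; nlinarith

theorem deg_mul_a_k {u : ℕ × ℕ} (h : a k ∣ u.1 + u.2) : deg k a u * a k = u.1 + u.2 :=
  Nat.div_mul_cancel h

theorem deg_add_e (hd : 0 < a k) {h : ℕ} (hh : h ≤ a k) (u : ℕ × ℕ) :
    deg k a (u + e k a h) = deg k a u + 1 := by
  simp only [deg, e, Prod.fst_add, Prod.snd_add]
  rw [show u.1 + h + (u.2 + (a k - h)) = u.1 + u.2 + a k by omega, Nat.add_div_right _ hd]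

theorem deg_add_mul (hd : 0 < a k) (u : ℕ × ℕ) (α β : ℕ) :
    deg k a (u + (β * a k, α * a k)) = deg k a u + α + β := by
  simp only [deg, Prod.fst_add, Prod.snd_add]
  rw [show u.1 + β * a k + (u.2 + α * a k) = u.1 + u.2 + (α + β) * a k by ring,
    Nat.add_mul_div_right _ _ hd, add_assoc]

theorem deg_e (hd : 0 < a k) {h : ℕ} (hh : h ≤ a k) : deg k a (e k a h) = 1 := by
  simp [deg, e, Nat.add_sub_cancel' hh, Nat.div_self hd]

theorem mem_S_iff_delta1_le_deg (ha0 : a 0 = 0) (hmono : StrictMonoOn a (Set.Iic k)) (hk : 0 < k)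
    {u : ℕ × ℕ} (hu : u ∈ S' k a) : u ∈ S k a ↔ delta1 k a u.1 ≤ deg k a u := by
  obtain ⟨hdvd, h1, -⟩ := (mem_S'_iff ha0 hmono hk).1 hu
  rw [mem_S_iff_delta1 ha0 hmono hk, ← deg_mul_a_k hdvd,
    Nat.mul_le_mul_right_iff (a_k_pos ha0 hmono hk)]
  simp [h1]

theorem mem_S_iff_delta2_le_deg (ha0 : a 0 = 0) (hmono : StrictMonoOn a (Set.Iic k)) (hk : 0 < k)
    {u : ℕ × ℕ} (hu : u ∈ S' k a) : u ∈ S k a ↔ delta2 k a u.2 ≤ deg k a u := by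
  obtain ⟨hdvd, -, h2⟩ := (mem_S'_iff ha0 hmono hk).1 hu
  rw [mem_S_iff_delta2 ha0 hmono hk, ← deg_mul_a_k hdvd,
    Nat.mul_le_mul_right_iff (a_k_pos ha0 hmono hk)]
  simp [h2]

theorem add_e_zero_mem_S_iff (ha0 : a 0 = 0) (hmono : StrictMonoOn a (Set.Iic k)) (hk : 0 < k)
    {u : ℕ × ℕ} (hu : u ∈ S' k a) :
    u + e k a 0 ∈ S k a ↔ delta1 k a u.1 ≤ deg k a u + 1 := by
  rw [mem_S_iff_delta1_le_deg ha0 hmono hk (add_mem_S' hu (ha0 ▸ e_mem_S (Nat.zero_le k))),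
    deg_add_e (a_k_pos ha0 hmono hk) (Nat.zero_le _)]
  simp [e]

theorem add_e_a_k_mem_S_iff (ha0 : a 0 = 0) (hmono : StrictMonoOn a (Set.Iic k)) (hk : 0 < k)
    {u : ℕ × ℕ} (hu : u ∈ S' k a) :
    u + e k a (a k) ∈ S k a ↔ delta2 k a u.2 ≤ deg k a u + 1 := by
  rw [mem_S_iff_delta2_le_deg ha0 hmono hk (add_mem_S' hu (e_mem_S le_rfl)),
    deg_add_e (a_k_pos ha0 hmono hk) le_rfl]
  simp [e]

theorem delta1_zero : delta1 k a 0 = 0 := minLen_zero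

theorem omega1_spec (hn : n ∈ S1 k a) (hi : n % a k = i % a k) :
    omega1 k a i ∈ S1 k a ∧ omega1 k a i % a k = i % a k ∧ ∃ β, n = omega1 k a i + β * a k :=
  sInf_mod_spec hn hi

theorem omega2_spec (hn : n ∈ S2 k a) (hi : n % a k = i % a k) :
    omega2 k a i ∈ S2 k a ∧ omega2 k a i % a k = i % a k ∧ ∃ β, n = omega2 k a i + β * a k :=
  sInf_mod_spec hn hi

theorem exists_mem_S2_dvd_add (ha0 : a 0 = 0) (hmono : StrictMonoOn a (Set.Iic k)) (hk : 0 < k)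
    (hn : n ∈ S1 k a) : ∃ m ∈ S2 k a, a k ∣ n + m := by
  obtain ⟨x, rfl⟩ := hn
  have hu : (∑ i ∈ Icc 1 k, x i * a i, ∑ i ∈ range (k + 1), x i * (a k - a i)) ∈ S k a := by
    refine mem_S_iff_exists_sums.2 ⟨x, ?_, rfl⟩
    show ∑ i ∈ Icc 1 k, x i * a i = ∑ i ∈ range (k + 1), x i * a i
    rw [← add_sum_erase _ _ (mem_range.2 (Nat.succ_pos k)), range_succ_erase_zero, ha0, mul_zero,
      zero_add]
  obtain ⟨h2, hdvd, -⟩ := (mem_S_iff_delta2 ha0 hmono hk).1 hu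
  exact ⟨_, h2, hdvd⟩

theorem w_mem_S' (ha0 : a 0 = 0) (hmono : StrictMonoOn a (Set.Iic k)) (hk : 0 < k)
    (hi : i ≤ a k) (hn : n ∈ S1 k a) (hni : n % a k = i % a k) : w k a i ∈ S' k a := by
  obtain ⟨h1, h1i, -⟩ := omega1_spec hn hni
  obtain ⟨m, hm, hdvd⟩ := exists_mem_S2_dvd_add ha0 hmono hk h1
  have hmi := mod_eq_sub_of_dvd_add hi h1i hdvd
  obtain ⟨h2, h2i, -⟩ := omega2_spec hm hmi
  refine (mem_S'_iff ha0 hmono hk).2 ⟨Nat.modEq_zero_iff_dvd.1 ?_, h1, h2⟩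
  exact (Nat.ModEq.add_left _ (h2i.trans hmi.symm)).trans (Nat.modEq_zero_iff_dvd.2 hdvd)

theorem w_a_eq_e (ha0 : a 0 = 0) (hmono : StrictMonoOn a (Set.Iic k)) {j : ℕ} (hj1 : 1 ≤ j)
    (hjk : j < k) : w k a (a j) = e k a (a j) := by
  have hlt : a j < a k := hmono hjk.le Set.self_mem_Iic hjk
  have hpos : 0 < a j := ha0 ▸ hmono (Nat.zero_le k) hjk.le hj1
  exact Prod.ext (sInf_mod_eq_self (mem_natSpan_of_mem (by simp; omega)) hlt)
    (sInf_mod_eq_self (mem_natSpan_of_mem (c := fun i => a k - a i) (mem_range.2 hjk))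
      (by omega))

theorem mem_II_iff (ha0 : a 0 = 0) (hmono : StrictMonoOn a (Set.Iic k)) (hk : 0 < k) :
    i ∈ II k a ↔ i < a k ∧ deg k a (w k a i) < delta1 k a (w k a i).1 := by
  have hd := a_k_pos ha0 hmono hk
  refine ⟨fun ⟨_, hid, _, hlt⟩ => ⟨by omega, hlt⟩, fun ⟨hid, hlt⟩ => ⟨?_, by omega, ?_, hlt⟩⟩
  · refine Nat.pos_of_ne_zero ?_
    rintro rfl
    have hw0 : (w k a 0).1 = 0 := sInf_mod_eq_self zero_mem_natSpan hd
    rw [hw0, delta1_zero] at hlt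
    exact Nat.not_lt_zero _ hlt
  · rintro j hj1 hjk rfl
    rw [w_a_eq_e ha0 hmono hj1 (by omega), deg_e hd (a_le_a_k hmono (by omega))] at hlt
    exact absurd (minLen_le_one (s := Icc 1 k) (c := a) (by simp; omega)) (not_le.2 hlt)

theorem w_mem_S'_diff_S (ha0 : a 0 = 0) (hmono : StrictMonoOn a (Set.Iic k)) (hk : 0 < k)
    (hi : i ∈ II k a) : w k a i ∈ S' k a \ S k a := by
  obtain ⟨hid, hlt⟩ := (mem_II_iff ha0 hmono hk).1 hi
  -- `δ₁ 0 = 0` rules out `ω₁ i = 0`, so the infimum defining `ω₁ i` is not `sInf ∅`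
  have hpos : 0 < omega1 k a i := Nat.pos_of_ne_zero fun h0 => by
    change deg k a (w k a i) < delta1 k a (omega1 k a i) at hlt
    rw [h0, delta1_zero] at hlt
    exact Nat.not_lt_zero _ hlt
  obtain ⟨h1, h1i⟩ := Nat.sInf_mem (Nat.nonempty_of_pos_sInf hpos)
  have hw := w_mem_S' ha0 hmono hk hid.le h1 h1i
  exact ⟨hw, fun hS => (not_le.2 hlt) ((mem_S_iff_delta1_le_deg ha0 hmono hk hw).1 hS)⟩

theorem delta_w_eq_deg_add_one (ha0 : a 0 = 0) (hmono : StrictMonoOn a (Set.Iic k)) (hk : 0 < k)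
    (hi : i ∈ II k a) (h0 : w k a i + e k a 0 ∈ S k a) (hd : w k a i + e k a (a k) ∈ S k a) :
    delta1 k a (w k a i).1 = deg k a (w k a i) + 1 ∧
      delta2 k a (w k a i).2 = deg k a (w k a i) + 1 := by
  have hw := w_mem_S'_diff_S ha0 hmono hk hi
  have hle1 := (add_e_zero_mem_S_iff ha0 hmono hk hw.1).1 h0
  have hle2 := (add_e_a_k_mem_S_iff ha0 hmono hk hw.1).1 hd
  have hlt1 := ((mem_II_iff ha0 hmono hk).1 hi).2
  have hlt2 := not_le.1 fun h => hw.2 ((mem_S_iff_delta2_le_deg ha0 hmono hk hw.1).2 h)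
  omega

theorem exists_mem_II_of_mem_S'_diff_S (ha0 : a 0 = 0) (hmono : StrictMonoOn a (Set.Iic k))
    (hk : 0 < k) {u : ℕ × ℕ} (hu : u ∈ S' k a \ S k a) :
    ∃ i ∈ II k a, ∃ α β : ℕ, u = w k a i + (β * a k, α * a k) ∧
      deg k a (w k a i) + α < delta1 k a (w k a i).1 ∧
      deg k a (w k a i) + β < delta2 k a (w k a i).2 := by
  have hd := a_k_pos ha0 hmono hk
  obtain ⟨hdvd, h1, h2⟩ := (mem_S'_iff ha0 hmono hk).1 hu.1
  set i := u.1 % a k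
  have hi : u.1 % a k = i % a k := (Nat.mod_mod _ _).symm
  obtain ⟨hw1, -, β, hβ⟩ := omega1_spec h1 hi
  obtain ⟨hw2, -, α, hα⟩ := omega2_spec h2 (mod_eq_sub_of_dvd_add (Nat.mod_lt _ hd).le hi hdvd)
  have hu_eq : u = w k a i + (β * a k, α * a k) := Prod.ext hβ hα
  have hdeg : deg k a u = deg k a (w k a i) + α + β := by
    rw [hu_eq]; exact deg_add_mul hd _ α β
  have hlt1 : deg k a u < delta1 k a u.1 :=
    not_le.1 fun h => hu.2 ((mem_S_iff_delta1_le_deg ha0 hmono hk hu.1).2 h)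
  have hlt2 : deg k a u < delta2 k a u.2 :=
    not_le.1 fun h => hu.2 ((mem_S_iff_delta2_le_deg ha0 hmono hk hu.1).2 h)
  have hδ1 : delta1 k a u.1 ≤ delta1 k a (w k a i).1 + β := by
    rw [hβ]; exact minLen_add_mul_le (s := Icc 1 k) (c := a) (by simp; omega) hw1 β
  have hδ2 : delta2 k a u.2 ≤ delta2 k a (w k a i).2 + α := by
    have := minLen_add_mul_le (s := range k) (c := fun i => a k - a i) (mem_range.2 hk) hw2 α
    simp only [ha0, Nat.sub_zero] at this
    rw [hα]; exact this
  exact ⟨i, (mem_II_iff ha0 hmono hk).2 ⟨Nat.mod_lt _ hd, by omega⟩, α, β, hu_eq, by omega,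
    by omega⟩

theorem eq_w_of_mem_S'_diff_S (ha0 : a 0 = 0) (hmono : StrictMonoOn a (Set.Iic k)) (hk : 0 < k)
    (hδ : ∀ i ∈ II k a, delta1 k a (w k a i).1 = deg k a (w k a i) + 1 ∧
      delta2 k a (w k a i).2 = deg k a (w k a i) + 1)
    {u : ℕ × ℕ} (hu : u ∈ S' k a \ S k a) : ∃ i ∈ II k a, u = w k a i := by
  obtain ⟨i, hi, α, β, rfl, h1, h2⟩ := exists_mem_II_of_mem_S'_diff_S ha0 hmono hk hu
  obtain rfl : α = 0 := by have := (hδ i hi).1; omega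
  obtain rfl : β = 0 := by have := (hδ i hi).2; omega
  exact ⟨i, hi, by simp⟩

end Curve

theorem statement_4_general (k : ℕ) (a : ℕ → ℕ) (hk : 3 ≤ k) (ha0 : a 0 = 0)
    (hmono : ∀ i, i < k → a i < a (i+1)) :
    ((S' k a \ S k a).Nonempty ∧
        ∀ u ∈ S' k a \ S k a, ∀ j ≤ k, u + e k a (a j) ∈ S k a) ↔
    ((II k a).Nonempty ∧
        (∀ i ∈ II k a, delta1 k a (w k a i).1 = deg k a (w k a i) + 1 ∧
          delta2 k a (w k a i).2 = deg k a (w k a i) + 1) ∧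
        ¬ ∃ i ∈ II k a, ∃ j ∈ II k a, ∃ h, 1 ≤ h ∧ h ≤ k - 1 ∧
          w k a j = w k a i + e k a (a h)) := by
  have hmono' : StrictMonoOn a (Set.Iic k) :=
    strictMonoOn_Iic_of_lt_succ fun i hi => by simpa using hmono i hi
  have hk' : 0 < k := by omega
  constructor
  · rintro ⟨⟨u, hu⟩, hstep⟩
    obtain ⟨i, hi, -⟩ := exists_mem_II_of_mem_S'_diff_S ha0 hmono' hk' hu
    refine ⟨⟨i, hi⟩, fun i hi => ?_, ?_⟩
    · have hw := w_mem_S'_diff_S ha0 hmono' hk' hi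
      exact delta_w_eq_deg_add_one ha0 hmono' hk' hi (ha0 ▸ hstep _ hw 0 (Nat.zero_le k))
        (hstep _ hw k le_rfl)
    · rintro ⟨i, hi, j, hj, h, -, hhk, hw⟩
      exact (w_mem_S'_diff_S ha0 hmono' hk' hj).2
        (hw ▸ hstep _ (w_mem_S'_diff_S ha0 hmono' hk' hi) h (by omega))
  · rintro ⟨⟨i, hi⟩, hδ, hpair⟩
    refine ⟨⟨_, w_mem_S'_diff_S ha0 hmono' hk' hi⟩, fun u hu j hj => ?_⟩
    obtain ⟨i, hi, rfl⟩ := eq_w_of_mem_S'_diff_S ha0 hmono' hk' hδ hu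
    obtain rfl | hj0 := eq_or_ne j 0
    · rw [ha0, add_e_zero_mem_S_iff ha0 hmono' hk' hu.1]
      exact (hδ i hi).1.le
    obtain rfl | hjk := eq_or_ne j k
    · rw [add_e_a_k_mem_S_iff ha0 hmono' hk' hu.1]
      exact (hδ i hi).2.le
    by_contra hnot
    obtain ⟨i', hi', heq⟩ :=
      eq_w_of_mem_S'_diff_S ha0 hmono' hk' hδ ⟨add_mem_S' hu.1 (e_mem_S hj), hnot⟩
    exact hpair ⟨i, hi, i', hi', j, by omega, by omega, heq.symm⟩

theorem statement_4 (k : ℕ) (a : ℕ → ℕ) (hk : 3 ≤ k) (ha0 : a 0 = 0)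
    (hmono : ∀ i, i < k → a i < a (i+1)) (hgcd : (Finset.Icc 1 k).gcd a = 1) :
    ((S' k a \ S k a).Nonempty ∧
        ∀ u ∈ S' k a \ S k a, ∀ j ≤ k, u + e k a (a j) ∈ S k a) ↔
    ((II k a).Nonempty ∧
        (∀ i ∈ II k a, delta1 k a (w k a i).1 = deg k a (w k a i) + 1 ∧
          delta2 k a (w k a i).2 = deg k a (w k a i) + 1) ∧
        ¬ ∃ i ∈ II k a, ∃ j ∈ II k a, ∃ h, 1 ≤ h ∧ h ≤ k - 1 ∧
          w k a j = w k a i + e k a (a h)) :=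
  statement_4_general k a hk ha0 hmono

end ProjMonomialCurve
end

section
/- Let ε := max{a₁, d − a_{k−1}} and assume there exists 0 ≤ i ≤ d − ε + 1 such that i, i+1, …, i+ε−1 all belong to A₁. Then S′∖S = ∅ if and only if the following two conditions hold: (i) every x ∈ {0,…,i−1} with x ∉ A₁ satisfies x ∉ S₍₁₎ and x + d ∈ A₁ + A₁ (a sum of two elements of A₁); (ii) every x ∈ {i+ε,…,d} with x ∉ A₁ satisfies d − x ∉ S₍₂₎ and x ∈ A₁ + A₁. -/
namespace ProjMonomialCurve

def hasRep1 (k : ℕ) (a : ℕ → ℕ) (n t : ℕ) : Prop :=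
  ∃ x : ℕ → ℕ, n = ∑ i ∈ Finset.Icc 1 k, x i * a i ∧ ∑ i ∈ Finset.Icc 1 k, x i ≤ t

def hasRep2 (k : ℕ) (a : ℕ → ℕ) (n t : ℕ) : Prop :=
  ∃ x : ℕ → ℕ, n = ∑ i ∈ Finset.range k, x i * (a k - a i) ∧ ∑ i ∈ Finset.range k, x i ≤ t

lemma sum_split (k : ℕ) (f : ℕ → ℕ) :
    ∑ i ∈ Finset.range (k+1), f i = f 0 + ∑ i ∈ Finset.Icc 1 k, f i := by
  have h : Finset.range (k+1) = insert 0 (Finset.Icc 1 k) := by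
    ext x; simp [Finset.mem_range, Finset.mem_Icc]; omega
  rw [h, Finset.sum_insert (by simp)]

lemma hasRep1_mono {k : ℕ} {a : ℕ → ℕ} {n t t' : ℕ} (h : hasRep1 k a n t) (ht : t ≤ t') :
    hasRep1 k a n t' := by
  obtain ⟨x, hx, hs⟩ := h; exact ⟨x, hx, hs.trans ht⟩

lemma hasRep1_zero (k : ℕ) (a : ℕ → ℕ) (t : ℕ) : hasRep1 k a 0 t :=
  ⟨fun _ => 0, by simp, by simp⟩

lemma hasRep1_add {k : ℕ} {a : ℕ → ℕ} {n n' t t' : ℕ}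
    (h : hasRep1 k a n t) (h' : hasRep1 k a n' t') : hasRep1 k a (n + n') (t + t') := by
  obtain ⟨x, hx, hs⟩ := h; obtain ⟨y, hy, hs'⟩ := h'
  refine ⟨fun i => x i + y i, ?_, ?_⟩
  · rw [hx, hy, ← Finset.sum_add_distrib]
    exact Finset.sum_congr rfl fun i _ => (add_mul _ _ _).symm
  · rw [Finset.sum_add_distrib]; omega

lemma hasRep1_gen {k : ℕ} {a : ℕ → ℕ} {j : ℕ} (hj1 : 1 ≤ j) (hjk : j ≤ k) :
    hasRep1 k a (a j) 1 := by
  have hj : j ∈ Finset.Icc 1 k := Finset.mem_Icc.mpr ⟨hj1, hjk⟩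
  refine ⟨fun i => if i = j then 1 else 0, ?_, ?_⟩
  · simp only [ite_mul, one_mul, zero_mul]
    rw [Finset.sum_ite_eq' (Finset.Icc 1 k) j a]
    simp [hj]
  · rw [Finset.sum_ite_eq' (Finset.Icc 1 k) j (fun _ => 1)]
    simp [hj]

lemma hasRep1_A1 {k : ℕ} {a : ℕ → ℕ} (ha0 : a 0 = 0) {n : ℕ} (h : n ∈ A1set k a) :
    hasRep1 k a n 1 := by
  obtain ⟨j, hjk, rfl⟩ := h
  rcases Nat.eq_zero_or_pos j with rfl | hj
  · rw [ha0]; exact hasRep1_zero k a 1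
  · exact hasRep1_gen hj hjk

lemma mem_S1_iff {k : ℕ} {a : ℕ → ℕ} {n : ℕ} : n ∈ S1 k a ↔ ∃ t, hasRep1 k a n t := by
  constructor
  · rintro ⟨x, hx⟩; exact ⟨_, x, hx, le_rfl⟩
  · rintro ⟨t, x, hx, _⟩; exact ⟨x, hx⟩

lemma hasRep2_mono {k : ℕ} {a : ℕ → ℕ} {n t t' : ℕ} (h : hasRep2 k a n t) (ht : t ≤ t') :
    hasRep2 k a n t' := by
  obtain ⟨x, hx, hs⟩ := h; exact ⟨x, hx, hs.trans ht⟩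

lemma hasRep2_zero (k : ℕ) (a : ℕ → ℕ) (t : ℕ) : hasRep2 k a 0 t :=
  ⟨fun _ => 0, by simp, by simp⟩

lemma hasRep2_add {k : ℕ} {a : ℕ → ℕ} {n n' t t' : ℕ}
    (h : hasRep2 k a n t) (h' : hasRep2 k a n' t') : hasRep2 k a (n + n') (t + t') := by
  obtain ⟨x, hx, hs⟩ := h; obtain ⟨y, hy, hs'⟩ := h'
  refine ⟨fun i => x i + y i, ?_, ?_⟩
  · rw [hx, hy, ← Finset.sum_add_distrib]
    exact Finset.sum_congr rfl fun i _ => (add_mul _ _ _).symm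
  · rw [Finset.sum_add_distrib]; omega

lemma hasRep2_gen {k : ℕ} {a : ℕ → ℕ} {j : ℕ} (hjk : j < k) :
    hasRep2 k a (a k - a j) 1 := by
  have hj : j ∈ Finset.range k := Finset.mem_range.mpr hjk
  refine ⟨fun i => if i = j then 1 else 0, ?_, ?_⟩
  · simp only [ite_mul, one_mul, zero_mul]
    rw [Finset.sum_ite_eq' (Finset.range k) j (fun i => a k - a i)]
    simp [hj]
  · rw [Finset.sum_ite_eq' (Finset.range k) j (fun _ => 1)]
    simp [hj]

lemma mem_S2_iff {k : ℕ} {a : ℕ → ℕ} {n : ℕ} : n ∈ S2 k a ↔ ∃ t, hasRep2 k a n t := by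
  constructor
  · rintro ⟨x, hx⟩; exact ⟨_, x, hx, le_rfl⟩
  · rintro ⟨t, x, hx, _⟩; exact ⟨x, hx⟩


lemma peel1 {k : ℕ} (a x : ℕ → ℕ) {j : ℕ} (hj : j ∈ Finset.Icc 1 k) (hxj : 1 ≤ x j) :
    ∑ i ∈ Finset.Icc 1 k, x i * a i
      = a j + ∑ i ∈ Finset.Icc 1 k, (Function.update x j (x j - 1)) i * a i ∧
    ∑ i ∈ Finset.Icc 1 k, x i
      = 1 + ∑ i ∈ Finset.Icc 1 k, (Function.update x j (x j - 1)) i := by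
  set y := Function.update x j (x j - 1) with hy
  have hyj : y j = x j - 1 := Function.update_self _ _ _
  have hagree : ∀ i ∈ (Finset.Icc 1 k).erase j, y i * a i = x i * a i := by
    intro i hi
    rw [hy, Function.update_of_ne (Finset.ne_of_mem_erase hi)]
  have hagree2 : ∀ i ∈ (Finset.Icc 1 k).erase j, y i = x i := by
    intro i hi
    rw [hy, Function.update_of_ne (Finset.ne_of_mem_erase hi)]
  have e1 : ∑ i ∈ Finset.Icc 1 k, x i * a i
      = x j * a j + ∑ i ∈ (Finset.Icc 1 k).erase j, x i * a i :=
    (Finset.add_sum_erase _ _ hj).symm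
  have e2 : ∑ i ∈ Finset.Icc 1 k, y i * a i
      = y j * a j + ∑ i ∈ (Finset.Icc 1 k).erase j, y i * a i :=
    (Finset.add_sum_erase _ _ hj).symm
  have e3 : ∑ i ∈ Finset.Icc 1 k, x i = x j + ∑ i ∈ (Finset.Icc 1 k).erase j, x i :=
    (Finset.add_sum_erase _ _ hj).symm
  have e4 : ∑ i ∈ Finset.Icc 1 k, y i = y j + ∑ i ∈ (Finset.Icc 1 k).erase j, y i :=
    (Finset.add_sum_erase _ _ hj).symm
  have key : x j * a j = a j + (x j - 1) * a j := by
    obtain ⟨m, hm⟩ := Nat.exists_eq_add_of_le hxj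
    rw [hm, Nat.add_sub_cancel_left]; ring
  have key2 : x j = 1 + (x j - 1) := by omega
  constructor
  · rw [e1, e2, Finset.sum_congr rfl hagree, hyj, key, add_assoc]
  · rw [e3, e4, Finset.sum_congr rfl hagree2, hyj]
    conv_lhs => rw [key2]
    rw [add_assoc]

lemma rep1_one {k : ℕ} {a : ℕ → ℕ} (ha0 : a 0 = 0) {n : ℕ} (h : hasRep1 k a n 1) :
    n ∈ A1set k a := by
  obtain ⟨x, hx, hs⟩ := h
  by_cases hz : ∀ j ∈ Finset.Icc 1 k, x j = 0
  · have hsum0 : ∑ i ∈ Finset.Icc 1 k, x i * a i = 0 :=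
      Finset.sum_eq_zero (fun i hi => by rw [hz i hi, zero_mul])
    exact ⟨0, Nat.zero_le k, by rw [ha0, hx, hsum0]⟩
  · push_neg at hz
    obtain ⟨j, hj, hxj⟩ := hz
    obtain ⟨h1, h2⟩ := peel1 a x hj (Nat.one_le_iff_ne_zero.mpr hxj)
    have hrest : ∑ i ∈ Finset.Icc 1 k, (Function.update x j (x j - 1)) i = 0 := by omega
    have hsum0 : ∑ i ∈ Finset.Icc 1 k, (Function.update x j (x j - 1)) i * a i = 0 :=
      Finset.sum_eq_zero (fun i hi => by
        rw [Finset.sum_eq_zero_iff.mp hrest i hi, zero_mul])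
    exact ⟨j, (Finset.mem_Icc.mp hj).2, by rw [hx, h1, hsum0, add_zero]⟩

lemma rep1_two {k : ℕ} {a : ℕ → ℕ} (ha0 : a 0 = 0) {n : ℕ} (h : hasRep1 k a n 2) :
    ∃ y ∈ A1set k a, ∃ z ∈ A1set k a, n = y + z := by
  obtain ⟨x, hx, hs⟩ := h
  by_cases hz : ∀ j ∈ Finset.Icc 1 k, x j = 0
  · have hsum0 : ∑ i ∈ Finset.Icc 1 k, x i * a i = 0 :=
      Finset.sum_eq_zero (fun i hi => by rw [hz i hi, zero_mul])
    exact ⟨0, ⟨0, Nat.zero_le k, ha0⟩, 0, ⟨0, Nat.zero_le k, ha0⟩, by rw [hx, hsum0]⟩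
  · push_neg at hz
    obtain ⟨j, hj, hxj⟩ := hz
    obtain ⟨h1, h2⟩ := peel1 a x hj (Nat.one_le_iff_ne_zero.mpr hxj)
    have hrep : hasRep1 k a (∑ i ∈ Finset.Icc 1 k, (Function.update x j (x j - 1)) i * a i) 1 :=
      ⟨_, rfl, by omega⟩
    exact ⟨a j, ⟨j, (Finset.mem_Icc.mp hj).2, rfl⟩, _, rep1_one ha0 hrep, by rw [hx, h1]⟩

lemma hasRep1_two_of {k : ℕ} {a : ℕ → ℕ} (ha0 : a 0 = 0) {n y z : ℕ}
    (hy : y ∈ A1set k a) (hz : z ∈ A1set k a) (h : n = y + z) : hasRep1 k a n 2 := by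
  subst h; exact hasRep1_add (hasRep1_A1 ha0 hy) (hasRep1_A1 ha0 hz)

lemma mem_S_iff_pair {k : ℕ} {a : ℕ → ℕ} {v1 v2 : ℕ} :
    (v1, v2) ∈ S k a ↔ ∃ x : ℕ → ℕ,
      v1 = ∑ i ∈ Finset.range (k+1), x i * a i ∧
      v2 = ∑ i ∈ Finset.range (k+1), x i * (a k - a i) := by
  constructor
  · rintro ⟨x, hx⟩
    refine ⟨x, ?_, ?_⟩
    · have := congrArg Prod.fst hx
      simpa [e, Prod.fst_sum, smul_eq_mul] using this
    · have := congrArg Prod.snd hx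
      simpa [e, Prod.snd_sum, smul_eq_mul] using this
  · rintro ⟨x, h1, h2⟩
    refine ⟨x, ?_⟩
    apply Prod.ext
    · simpa [e, Prod.fst_sum, smul_eq_mul] using h1
    · simpa [e, Prod.snd_sum, smul_eq_mul] using h2


lemma mem_S_iff_rep {k : ℕ} {a : ℕ → ℕ} (ha0 : a 0 = 0) (hak : ∀ j, j ≤ k → a j ≤ a k)
    {v1 v2 : ℕ} :
    (v1, v2) ∈ S k a ↔ ∃ m, v1 + v2 = m * a k ∧ hasRep1 k a v1 m := by
  rw [mem_S_iff_pair]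
  constructor
  · rintro ⟨x, h1, h2⟩
    refine ⟨∑ i ∈ Finset.range (k+1), x i, ?_, ?_⟩
    · rw [h1, h2, ← Finset.sum_add_distrib, Finset.sum_mul]
      refine Finset.sum_congr rfl fun i hi => ?_
      have hik : a i ≤ a k := hak i (by simpa [Nat.lt_succ_iff] using hi)
      rw [← Nat.mul_add, Nat.add_sub_cancel' hik]
    · refine ⟨x, ?_, ?_⟩
      · rw [h1, sum_split, ha0, mul_zero, zero_add]
      · rw [sum_split]; omega
  · rintro ⟨m, hsum, x, hv1, ht⟩
    set t := ∑ i ∈ Finset.Icc 1 k, x i with htdef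
    set x' : ℕ → ℕ := fun i => if i = 0 then m - t else x i with hx'
    have hag : ∀ i ∈ Finset.Icc 1 k, x' i * a i = x i * a i := by
      intro i hi
      have : i ≠ 0 := by have := (Finset.mem_Icc.mp hi).1; omega
      simp [hx', this]
    have hag2 : ∀ i ∈ Finset.Icc 1 k, x' i * (a k - a i) = x i * (a k - a i) := by
      intro i hi
      have : i ≠ 0 := by have := (Finset.mem_Icc.mp hi).1; omega
      simp [hx', this]
    refine ⟨x', ?_, ?_⟩
    · rw [sum_split, Finset.sum_congr rfl hag, ← hv1]
      simp [hx', ha0]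
    · have hpair : ∀ i ∈ Finset.Icc 1 k, x i * (a k - a i) + x i * a i = x i * a k := by
        intro i hi
        have hik : a i ≤ a k := hak i (Finset.mem_Icc.mp hi).2
        rw [← Nat.mul_add, Nat.sub_add_cancel hik]
      have hkey : (∑ i ∈ Finset.Icc 1 k, x i * (a k - a i)) + v1 = t * a k := by
        rw [hv1, ← Finset.sum_add_distrib, htdef, Finset.sum_mul]
        exact Finset.sum_congr rfl hpair
      have hsnd : ∑ i ∈ Finset.range (k+1), x' i * (a k - a i)
          = (m - t) * (a k - 0) + ∑ i ∈ Finset.Icc 1 k, x i * (a k - a i) := by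
        rw [sum_split, Finset.sum_congr rfl hag2]
        simp [hx', ha0]
      have hmt : (m - t) * a k + t * a k = m * a k := by
        rw [← Nat.add_mul, Nat.sub_add_cancel ht]
      rw [hsnd, Nat.sub_zero]
      omega

lemma mem_S_iff_rep2 {k : ℕ} {a : ℕ → ℕ} (hak : ∀ j, j ≤ k → a j ≤ a k)
    {v1 v2 : ℕ} :
    (v1, v2) ∈ S k a ↔ ∃ m, v1 + v2 = m * a k ∧ hasRep2 k a v2 m := by
  rw [mem_S_iff_pair]
  constructor
  · rintro ⟨x, h1, h2⟩
    refine ⟨∑ i ∈ Finset.range (k+1), x i, ?_, ?_⟩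
    · rw [h1, h2, ← Finset.sum_add_distrib, Finset.sum_mul]
      refine Finset.sum_congr rfl fun i hi => ?_
      have hik : a i ≤ a k := hak i (by simpa [Nat.lt_succ_iff] using hi)
      rw [← Nat.mul_add, Nat.add_sub_cancel' hik]
    · refine ⟨x, ?_, ?_⟩
      · rw [h2, Finset.sum_range_succ, Nat.sub_self, mul_zero, add_zero]
      · rw [Finset.sum_range_succ]; omega
  · rintro ⟨m, hsum, x, hv2, ht⟩
    set t := ∑ i ∈ Finset.range k, x i with htdef
    set x' : ℕ → ℕ := fun i => if i = k then m - t else x i with hx'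
    have hag : ∀ i ∈ Finset.range k, x' i * a i = x i * a i := by
      intro i hi
      have : i ≠ k := Nat.ne_of_lt (Finset.mem_range.mp hi)
      simp [hx', this]
    have hag2 : ∀ i ∈ Finset.range k, x' i * (a k - a i) = x i * (a k - a i) := by
      intro i hi
      have : i ≠ k := Nat.ne_of_lt (Finset.mem_range.mp hi)
      simp [hx', this]
    refine ⟨x', ?_, ?_⟩
    · have hfst : ∑ i ∈ Finset.range (k+1), x' i * a i
          = ∑ i ∈ Finset.range k, x i * a i + (m - t) * a k := by
        rw [Finset.sum_range_succ, Finset.sum_congr rfl hag]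
        simp [hx']
      have hpair : ∀ i ∈ Finset.range k, x i * a i + x i * (a k - a i) = x i * a k := by
        intro i hi
        have hik : a i ≤ a k := hak i (Nat.le_of_lt (Finset.mem_range.mp hi))
        rw [← Nat.mul_add, Nat.add_sub_cancel' hik]
      have hkey : (∑ i ∈ Finset.range k, x i * a i) + v2 = t * a k := by
        rw [hv2, ← Finset.sum_add_distrib, htdef, Finset.sum_mul]
        exact Finset.sum_congr rfl hpair
      have hmt : (m - t) * a k + t * a k = m * a k := by
        rw [← Nat.add_mul, Nat.sub_add_cancel ht]
      rw [hfst]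
      omega
    · rw [Finset.sum_range_succ, Finset.sum_congr rfl hag2, ← hv2]
      simp [hx']

lemma mem_S'_iff_s5 {k : ℕ} {a : ℕ → ℕ} (ha0 : a 0 = 0) (hak : ∀ j, j ≤ k → a j ≤ a k)
    (hd : 0 < a k) {u1 u2 : ℕ} :
    (u1, u2) ∈ S' k a ↔ u1 ∈ S1 k a ∧ u2 ∈ S2 k a ∧ a k ∣ (u1 + u2) := by
  have he0 : e k a 0 = (0, a k) := by simp [e]
  have hed : e k a (a k) = (a k, 0) := by simp [e]
  constructor
  · rintro ⟨p, h1, h2⟩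
    rw [he0] at h1; rw [hed] at h2
    have h1' : (u1, u2 + p * a k) ∈ S k a := by
      simpa [Prod.ext_iff, Prod.smul_mk, smul_eq_mul] using h1
    have h2' : (u1 + p * a k, u2) ∈ S k a := by
      simpa [Prod.ext_iff, Prod.smul_mk, smul_eq_mul] using h2
    obtain ⟨m, hm, hrep⟩ := (mem_S_iff_rep ha0 hak).mp h1'
    obtain ⟨m', hm', hrep'⟩ := (mem_S_iff_rep2 hak).mp h2'
    refine ⟨mem_S1_iff.mpr ⟨m, hrep⟩, mem_S2_iff.mpr ⟨m', hrep'⟩, ?_⟩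
    have hdvd1 : a k ∣ u1 + u2 + p * a k := by
      refine ⟨m, ?_⟩
      have : a k * m = m * a k := Nat.mul_comm _ _
      omega
    have hdvd2 : a k ∣ p * a k := dvd_mul_left _ _
    have heq : u1 + u2 = u1 + u2 + p * a k - p * a k := by omega
    rw [heq]
    exact Nat.dvd_sub hdvd1 hdvd2
  · rintro ⟨hu1, hu2, c, hc⟩
    obtain ⟨xx, hx⟩ := hu1
    obtain ⟨yy, hy⟩ := hu2
    set t := ∑ i ∈ Finset.Icc 1 k, xx i with htdef
    set s := ∑ i ∈ Finset.range k, yy i with hsdef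
    refine ⟨t + s, ?_, ?_⟩
    · rw [he0]
      have heq : (u1, u2) + (t+s) • ((0 : ℕ), a k) = (u1, u2 + (t+s) * a k) := by
        simp [Prod.ext_iff, Prod.smul_mk, smul_eq_mul]
      rw [heq, mem_S_iff_rep ha0 hak]
      have hmul : (c + (t + s)) * a k = a k * c + (t * a k + s * a k) := by ring
      have hmul2 : (t + s) * a k = t * a k + s * a k := by ring
      refine ⟨c + (t + s), by rw [hmul, hmul2]; omega, ⟨xx, hx, by omega⟩⟩
    · rw [hed]
      have heq : (u1, u2) + (t+s) • ((a k : ℕ), (0:ℕ)) = (u1 + (t+s) * a k, u2) := by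
        simp [Prod.ext_iff, Prod.smul_mk, smul_eq_mul]
      rw [heq, mem_S_iff_rep2 hak]
      have hmul : (c + (t + s)) * a k = a k * c + (t * a k + s * a k) := by ring
      have hmul2 : (t + s) * a k = t * a k + s * a k := by ring
      refine ⟨c + (t + s), by rw [hmul, hmul2]; omega, ⟨yy, hy, by omega⟩⟩


lemma hasRep1_dmul {k : ℕ} {a : ℕ → ℕ} (hk : 1 ≤ k) : ∀ q, hasRep1 k a (q * a k) q := by
  intro q
  induction q with
  | zero => simpa using hasRep1_zero k a 0
  | succ n ihn =>
      have h : (n+1) * a k = n * a k + a k := by ring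
      rw [h]
      exact hasRep1_add ihn (hasRep1_gen hk le_rfl)

lemma run1 {k : ℕ} {a : ℕ → ℕ} {i ε : ℕ} (ha0 : a 0 = 0) (ha1 : 1 ≤ a 1)
    (hε1 : a 1 ≤ ε) (hk : 1 ≤ k)
    (hrun : ∀ x, i ≤ x → x < i + ε → x ∈ A1set k a) :
    ∀ n, i ≤ n → n ∈ S1 k a := by
  intro n
  induction n using Nat.strong_induction_on with
  | _ n ih =>
    intro hn
    by_cases hlt : n < i + ε
    · exact mem_S1_iff.mpr ⟨1, hasRep1_A1 ha0 (hrun n hn hlt)⟩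
    · push_neg at hlt
      have h1 : n - a 1 < n := by omega
      have h2 : i ≤ n - a 1 := by omega
      obtain ⟨t, ht⟩ := mem_S1_iff.mp (ih _ h1 h2)
      have h3 : n = (n - a 1) + a 1 := by omega
      rw [h3]
      exact mem_S1_iff.mpr ⟨t + 1, hasRep1_add ht (hasRep1_gen le_rfl hk)⟩

lemma run2 {k : ℕ} {a : ℕ → ℕ} {i ε : ℕ} (hk : 1 ≤ k)
    (hstrict : a (k-1) < a k) (hε2 : a k - a (k-1) ≤ ε) (hiε : i + ε ≤ a k + 1)
    (hrun : ∀ x, i ≤ x → x < i + ε → x ∈ A1set k a) :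
    ∀ n, a k + 1 ≤ n + i + ε → n ∈ S2 k a := by
  intro n
  induction n using Nat.strong_induction_on with
  | _ n ih =>
    intro hn
    by_cases hbig : a k - i < n
    · have hg1 : 1 ≤ a k - a (k-1) := by omega
      have hlt : n - (a k - a (k-1)) < n := by omega
      have hhyp : a k + 1 ≤ (n - (a k - a (k-1))) + i + ε := by omega
      obtain ⟨t, ht⟩ := mem_S2_iff.mp (ih _ hlt hhyp)
      have hsplit : n = (n - (a k - a (k-1))) + (a k - a (k-1)) := by omega
      rw [hsplit]
      exact mem_S2_iff.mpr ⟨t + 1, hasRep2_add ht (hasRep2_gen (by omega : k - 1 < k))⟩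
    · push_neg at hbig
      have hdn1 : i ≤ a k - n := by omega
      have hdn2 : a k - n < i + ε := by omega
      obtain ⟨j, hjk, hj⟩ := hrun _ hdn1 hdn2
      have hn_le : n ≤ a k := by omega
      have hnj : n = a k - a j := by omega
      rcases Nat.eq_or_lt_of_le hjk with rfl | hjlt
      · have h0 : n = 0 := by omega
        rw [h0]; exact ⟨fun _ => 0, by simp⟩
      · rw [hnj]
        exact mem_S2_iff.mpr ⟨1, hasRep2_gen hjlt⟩


theorem statement_5' (k : ℕ) (a : ℕ → ℕ) (hk : 3 ≤ k) (ha0 : a 0 = 0)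
    (hmono : ∀ i, i < k → a i < a (i+1))
    (i : ℕ) (hi : i + max (a 1) (a k - a (k-1)) ≤ a k + 1)
    (hrun : ∀ x, i ≤ x → x < i + max (a 1) (a k - a (k-1)) → x ∈ A1set k a) :
    S' k a \ S k a = ∅ ↔
      ((∀ x < i, x ∉ A1set k a →
          x ∉ S1 k a ∧ ∃ y ∈ A1set k a, ∃ z ∈ A1set k a, x + a k = y + z) ∧
       (∀ x, i + max (a 1) (a k - a (k-1)) ≤ x → x ≤ a k → x ∉ A1set k a →
          a k - x ∉ S2 k a ∧ ∃ y ∈ A1set k a, ∃ z ∈ A1set k a, x = y + z)) := by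
  have hε1 : a 1 ≤ max (a 1) (a k - a (k-1)) := le_max_left _ _
  have hε2 : a k - a (k-1) ≤ max (a 1) (a k - a (k-1)) := le_max_right _ _
  generalize hgen : max (a 1) (a k - a (k-1)) = ε at hε1 hε2 hi hrun ⊢
  have hk1 : 1 ≤ k := by omega
  have amono : ∀ q, q ≤ k → ∀ p, p ≤ q → a p ≤ a q := by
    intro q
    induction q with
    | zero =>
        intro _ p hp
        have : p = 0 := Nat.le_zero.mp hp
        rw [this]
    | succ n ihn =>
        intro hq p hp
        rcases Nat.eq_or_lt_of_le hp with rfl | h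
        · exact le_rfl
        · exact (ihn (by omega) p (by omega)).trans (le_of_lt (hmono n (by omega)))
  have hak : ∀ j, j ≤ k → a j ≤ a k := fun j hj => amono k le_rfl j hj
  have ha1 : 1 ≤ a 1 := by
    have h := hmono 0 (by omega)
    simp only [Nat.zero_add] at h
    omega
  have hd : 0 < a k := lt_of_lt_of_le ha1 (hak 1 hk1)
  have hstrict : a (k-1) < a k := by
    have h1 := hmono (k-1) (by omega)
    have h2 : k - 1 + 1 = k := by omega
    rwa [h2] at h1
  have hε0 : 1 ≤ ε := le_trans ha1 hε1
  have hik : i ≤ a k := by omega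
  constructor
  · intro hCM
    have hsub : S' k a ⊆ S k a := Set.diff_eq_empty.mp hCM
    constructor
    · intro x hx hxA
      have hxd : x ≤ a k := by omega
      have hS2dx : a k - x ∈ S2 k a :=
        run2 hk1 hstrict hε2 hi hrun (a k - x) (by omega)
      constructor
      · intro hxS1
        have hmem : (x, a k - x) ∈ S' k a :=
          (mem_S'_iff_s5 ha0 hak hd).mpr ⟨hxS1, hS2dx, ⟨1, by omega⟩⟩
        obtain ⟨m, hm, hrep⟩ := (mem_S_iff_rep ha0 hak).mp (hsub hmem)
        have hm1 : m = 1 := by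
          have h1 : m * a k = 1 * a k := by omega
          exact Nat.eq_of_mul_eq_mul_right hd h1
        rw [hm1] at hrep
        exact hxA (rep1_one ha0 hrep)
      · have hxdS1 : x + a k ∈ S1 k a :=
          run1 ha0 ha1 hε1 hk1 hrun (x + a k) (by omega)
        have hmem : (x + a k, a k - x) ∈ S' k a :=
          (mem_S'_iff_s5 ha0 hak hd).mpr ⟨hxdS1, hS2dx, ⟨2, by omega⟩⟩
        obtain ⟨m, hm, hrep⟩ := (mem_S_iff_rep ha0 hak).mp (hsub hmem)
        have hm2 : m = 2 := by
          have h1 : m * a k = 2 * a k := by omega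
          exact Nat.eq_of_mul_eq_mul_right hd h1
        rw [hm2] at hrep
        exact rep1_two ha0 hrep
    · intro x hxε hxd hxA
      have hxS1 : x ∈ S1 k a := run1 ha0 ha1 hε1 hk1 hrun x (by omega)
      constructor
      · intro hS2
        have hmem : (x, a k - x) ∈ S' k a :=
          (mem_S'_iff_s5 ha0 hak hd).mpr ⟨hxS1, hS2, ⟨1, by omega⟩⟩
        obtain ⟨m, hm, hrep⟩ := (mem_S_iff_rep ha0 hak).mp (hsub hmem)
        have hm1 : m = 1 := by
          have h1 : m * a k = 1 * a k := by omega
          exact Nat.eq_of_mul_eq_mul_right hd h1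
        rw [hm1] at hrep
        exact hxA (rep1_one ha0 hrep)
      · have hS2' : a k - x + a k ∈ S2 k a :=
          run2 hk1 hstrict hε2 hi hrun (a k - x + a k) (by omega)
        have hmem : (x, a k - x + a k) ∈ S' k a :=
          (mem_S'_iff_s5 ha0 hak hd).mpr ⟨hxS1, hS2', ⟨2, by omega⟩⟩
        obtain ⟨m, hm, hrep⟩ := (mem_S_iff_rep ha0 hak).mp (hsub hmem)
        have hm2 : m = 2 := by
          have h1 : m * a k = 2 * a k := by omega
          exact Nat.eq_of_mul_eq_mul_right hd h1
        rw [hm2] at hrep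
        exact rep1_two ha0 hrep
  · rintro ⟨c1, c2⟩
    apply Set.diff_eq_empty.mpr
    intro u hu
    obtain ⟨u1, u2⟩ := u
    obtain ⟨hu1, hu2, c, hc⟩ := (mem_S'_iff_s5 ha0 hak hd).mp hu
    rw [mem_S_iff_rep ha0 hak]
    refine ⟨c, by rw [hc, Nat.mul_comm], ?_⟩
    have hex : ∃ q r, a k * q + r = u1 ∧ r < a k :=
      ⟨u1 / a k, u1 % a k, Nat.div_add_mod u1 (a k), Nat.mod_lt _ hd⟩
    obtain ⟨q, r, hdm, hrlt⟩ := hex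
    have hcm : a k * q = q * a k := Nat.mul_comm _ _
    have hqc : q ≤ c := by
      have h1 : a k * q ≤ a k * c := by omega
      exact Nat.le_of_mul_le_mul_left h1 hd
    have hdq : hasRep1 k a (q * a k) q := hasRep1_dmul hk1 q
    by_cases hr0 : r = 0
    · have hu1eq : u1 = q * a k := by omega
      rw [hu1eq]
      exact hasRep1_mono hdq hqc
    · have hqc1 : q + 1 ≤ c := by
        rcases Nat.eq_or_lt_of_le hqc with heq | h
        · rw [heq] at hdm
          omega
        · omega
      by_cases hrA : r ∈ A1set k a
      · have h2 : hasRep1 k a (q * a k + r) (q + 1) := hasRep1_add hdq (hasRep1_A1 ha0 hrA)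
        have hu1eq : u1 = q * a k + r := by omega
        rw [hu1eq]
        exact hasRep1_mono h2 (by omega)
      · by_cases hri : r < i
        · obtain ⟨hrS1, y, hy, z, hz, hyz⟩ := c1 r hri hrA
          have hq1 : 1 ≤ q := by
            by_contra hq0
            push_neg at hq0
            have hq00 : q = 0 := by omega
            rw [hq00, Nat.mul_zero, Nat.zero_add] at hdm
            exact hrS1 (hdm ▸ hu1)
          have hrep2 : hasRep1 k a (r + a k) 2 := hasRep1_two_of ha0 hy hz hyz
          have hrepq : hasRep1 k a ((q-1) * a k) (q-1) := hasRep1_dmul hk1 _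
          have hall : hasRep1 k a ((q-1) * a k + (r + a k)) (q - 1 + 2) :=
            hasRep1_add hrepq hrep2
          have hu1eq : u1 = (q-1) * a k + (r + a k) := by
            have h1 : (q-1) * a k + a k = q * a k := by
              have h0 : q - 1 + 1 = q := by omega
              calc (q-1) * a k + a k = (q-1+1) * a k := by ring
              _ = q * a k := by rw [h0]
            omega
          rw [hu1eq]
          exact hasRep1_mono hall (by omega)
        · push_neg at hri
          by_cases hrun' : r < i + ε
          · exact absurd (hrun r hri hrun') hrA
          · push_neg at hrun'
            obtain ⟨hrS2, y, hy, z, hz, hyz⟩ := c2 r hrun' (le_of_lt hrlt) hrA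
            have hqc2 : q + 2 ≤ c := by
              by_contra hcon
              push_neg at hcon
              have hceq : c = q + 1 := by omega
              have hval : a k * c = a k * q + a k := by rw [hceq]; ring
              have hu2eq : u2 = a k - r := by omega
              exact hrS2 (hu2eq ▸ hu2)
            have hrep2 : hasRep1 k a r 2 := hasRep1_two_of ha0 hy hz hyz
            have hall : hasRep1 k a (q * a k + r) (q + 2) := hasRep1_add hdq hrep2
            have hu1eq : u1 = q * a k + r := by omega
            rw [hu1eq]
            exact hasRep1_mono hall (by omega)


theorem statement_5 (k : ℕ) (a : ℕ → ℕ) (hk : 3 ≤ k) (ha0 : a 0 = 0)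
    (hmono : ∀ i, i < k → a i < a (i+1)) (hgcd : (Finset.Icc 1 k).gcd a = 1)
    (i : ℕ) (hi : i + max (a 1) (a k - a (k-1)) ≤ a k + 1)
    (hrun : ∀ x, i ≤ x → x < i + max (a 1) (a k - a (k-1)) → x ∈ A1set k a) :
    S' k a \ S k a = ∅ ↔
      ((∀ x < i, x ∉ A1set k a →
          x ∉ S1 k a ∧ ∃ y ∈ A1set k a, ∃ z ∈ A1set k a, x + a k = y + z) ∧
       (∀ x, i + max (a 1) (a k - a (k-1)) ≤ x → x ≤ a k → x ∉ A1set k a →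
          a k - x ∉ S2 k a ∧ ∃ y ∈ A1set k a, ∃ z ∈ A1set k a, x = y + z)) := by
  exact statement_5' k a hk ha0 hmono i hi hrun

end ProjMonomialCurve
end
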